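/- arXiv:1006.4658 — 2 statements merged into one kernel-verified Lean document; each statement's English description precedes it below -/
import Mathlib

section
/- Let D be an acyclic digraph and let u, v be distinct roots of D. Then: (i) if x, y are distinct non-root vertices with N⁻_D(x) = N⁻_D(y), then (D ▷ xy) ▷ uv = (D ▷ uv) ▷ xy; (ii) for every vertex x of D, (D*x) ▷ uv = (D ▷ uv) * x, where in each case the slide on uv is the arc-set operation A ↦ A Δ {(v,w) : w ∈ N⁺(u)} computed in the digraph to which it is applied. -/
/-- Local complementation at `x`: arc set `A(D) Δ (N⁻_D(x) × N⁺_D(x))`. -/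
def localComp {V : Type*} (R : V → V → Prop) (x : V) : V → V → Prop :=
  fun a b => Xor' (R a b) (R a x ∧ R x b)

/-- The slide on `uv`: arc set `A(D) Δ {(v,w) : w ∈ N⁺_D(u)}`. -/
def slideRel {V : Type*} (R : V → V → Prop) (u v : V) : V → V → Prop :=
  fun a b => Xor' (R a b) (a = v ∧ R u b)

/-- A digraph, given by its arc relation, is acyclic if it has no directed
cycle. -/
def AcyclicRel {V : Type*} (R : V → V → Prop) : Prop :=
  ∀ v : V, ¬ Relation.TransGen R v v

/-!
A slide on `uv` only rewrites the out-row of `v`, adding to it the out-row of `u`. Two such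
row operations commute as soon as neither rewrites the row the other one reads, and local
complementation at `x` commutes with a slide on `uv` as soon as `x ≠ v`. A non-root is
neither of the roots `u`, `v`; and local complementation at a root is the identity, while a
root of `D` is still a root after any slide, which settles the case `x = v`.
-/

section

variable {V : Type*} (R : V → V → Prop) {u v x y : V}

theorem slideRel_apply {a b : V} : slideRel R u v a b ↔ Xor (R a b) (a = v ∧ R u b) := Iff.rfl

theorem localComp_apply {a b : V} : localComp R x a b ↔ Xor (R a b) (R a x ∧ R x b) := Iff.rfl

theorem slideRel_apply_of_ne {a b : V} (ha : a ≠ v) : slideRel R u v a b ↔ R a b := by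
  simp [slideRel_apply, xor_def, ha]

theorem slideRel_slideRel_comm (hyu : u ≠ y) (hxv : x ≠ v) :
    slideRel (slideRel R x y) u v = slideRel (slideRel R u v) x y := by
  funext a b
  simp only [eq_iff_iff, slideRel_apply (slideRel R _ _), slideRel_apply_of_ne R hyu,
    slideRel_apply_of_ne R hxv]
  simp only [slideRel_apply]
  grind

theorem slideRel_localComp_comm (hxv : x ≠ v) :
    slideRel (localComp R x) u v = localComp (slideRel R u v) x := by
  funext a b
  simp only [eq_iff_iff, localComp_apply (slideRel R _ _), slideRel_apply_of_ne R hxv]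
  simp only [slideRel_apply, localComp_apply]
  grind

theorem localComp_eq_self_of_forall_not_rel (hx : ∀ w, ¬ R w x) : localComp R x = R := by
  funext a b
  simp [localComp_apply, xor_def, hx]

theorem slideRel_not_rel_of_forall_not_rel (hx : ∀ w, ¬ R w x) (w : V) :
    ¬ slideRel R u v w x := by
  simp [slideRel_apply, hx]

end

theorem root_slide_commutes_general {V : Type*} (R : V → V → Prop) (u v : V)
    (hu : ∀ w, ¬ R w u) (hv : ∀ w, ¬ R w v) :
    (∀ x y : V, x ≠ y → (∃ w, R w x) → (∃ w, R w y) → (∀ w, R w x ↔ R w y) →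
      slideRel (slideRel R x y) u v = slideRel (slideRel R u v) x y) ∧
    (∀ x : V, slideRel (localComp R x) u v = localComp (slideRel R u v) x) := by
  refine ⟨fun x y _ ⟨wx, hwx⟩ ⟨wy, hwy⟩ _ => ?_, fun x => ?_⟩
  · exact slideRel_slideRel_comm R (fun h => hu wy (h ▸ hwy)) (fun h => hv wx (h ▸ hwx))
  · by_cases hxv : x = v
    · subst hxv
      rw [localComp_eq_self_of_forall_not_rel R hv,
        localComp_eq_self_of_forall_not_rel _ (slideRel_not_rel_of_forall_not_rel R hv)]
    · exact slideRel_localComp_comm R hxv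

/-- Let `D` be an acyclic digraph and `u ≠ v` roots of `D`. Then (i) slides
on pairs of non-roots with the same in-neighborhoods commute with the slide
on `uv`, and (ii) local complementations commute with the slide on `uv`,
where each slide/local complementation is computed in the digraph to which it
is applied. -/
theorem root_slide_commutes {V : Type*} [Fintype V] (R : V → V → Prop)
    (hac : AcyclicRel R) (u v : V) (huv : u ≠ v)
    (hu : ∀ w, ¬ R w u) (hv : ∀ w, ¬ R w v) :
    (∀ x y : V, x ≠ y → (∃ w, R w x) → (∃ w, R w y) → (∀ w, R w x ↔ R w y) →
      slideRel (slideRel R x y) u v = slideRel (slideRel R u v) x y) ∧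
    (∀ x : V, slideRel (localComp R x) u v = localComp (slideRel R u v) x) :=
  root_slide_commutes_general R u v hu hv
end

section
/- Let D and H be acyclic digraphs with V(D) = V(H). Then H can be obtained from D by applying a finite sequence of slides, each performed on a pair of roots, if and only if: (1) L₀(D) = L₀(H) and the induced subgraphs D∖L₀(D) and H∖L₀(H) are equal; and (2) the 𝔽₂-row spaces of the submatrices A_D[L₀(D), V(D)∖L₀(D)] and A_H[L₀(H), V(H)∖L₀(H)] coincide. -/
/-- One slide performed on a pair of distinct roots. -/
inductive RootSlide {V : Type*} : (V → V → Prop) → (V → V → Prop) → Prop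
  | mk (R : V → V → Prop) (u v : V) (h : u ≠ v)
      (hu : ∀ w, ¬ R w u) (hv : ∀ w, ¬ R w v) : RootSlide R (slideRel R u v)

open Classical in
/-- The row of the adjacency matrix of `R` indexed by `u`, as a vector over
`𝔽₂`.  (For `u` a root, its entries at root columns are automatically `0`, so
this row carries exactly the submatrix `A_R[L₀, V∖L₀]` row.) -/
noncomputable def rowVec {V : Type*} (R : V → V → Prop) (u : V) : V → ZMod 2 :=
  fun y => if R u y then 1 else 0

/-- The `𝔽₂`-row space of the submatrix `A_R[L₀(R), V∖L₀(R)]` (rows indexed by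
the roots of `R`; columns at roots vanish automatically). -/
noncomputable def rootRowSpace {V : Type*} (R : V → V → Prop) :
    Submodule (ZMod 2) (V → ZMod 2) :=
  Submodule.span (ZMod 2) {f | ∃ u : V, (∀ w, ¬ R w u) ∧ f = rowVec R u}

/-!
Record a digraph by its adjacency rows over `𝔽₂`. A slide on two roots `u`, `v` adds row `u`
to row `v` and keeps the set of roots, so slide sequences on roots are exactly sequences of
elementary row additions among the root rows. Row additions preserve the other rows and the
span of the root rows. Conversely, two finite families with the same span are connected by row
additions: move a common nonzero vector `x` into a common row `u`, fix a functional `φ` with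
`φ x = 1`, add row `u` to every other row on which `φ` does not vanish, and induct on the
remaining rows, whose spans are now both `span ⊓ ker φ`.
-/

open Function Relation Submodule

theorem ZMod.eq_one_of_ne_zero_two {a : ZMod 2} (ha : a ≠ 0) : a = 1 := by
  decide +revert

theorem Submodule.span_insert_inf_ker {K V : Type*} [DivisionRing K] [AddCommGroup V]
    [Module K V] {φ : Module.Dual K V} {x : V} (hx : φ x ≠ 0) {A : Set V}
    (hA : A ⊆ LinearMap.ker φ) : span K (insert x A) ⊓ LinearMap.ker φ = span K A := by
  refine le_antisymm ?_ (le_inf (span_mono (Set.subset_insert _ _)) (span_le.2 hA))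
  rintro y ⟨hy, hyφ⟩
  obtain ⟨c, z, hz, rfl⟩ := mem_span_insert.1 hy
  have hφz : φ z = 0 := span_le.2 hA hz
  have hc : c * φ x = 0 := by simpa [hφz] using hyφ
  simpa [(mul_eq_zero.1 hc).resolve_right hx] using hz

theorem Submodule.span_image_sdiff_singleton_eq_inf_ker {ι K V : Type*} [DivisionRing K]
    [AddCommGroup V] [Module K V] {f : ι → V} {s : Set ι} {u : ι} (hu : u ∈ s)
    {φ : Module.Dual K V} (hφ : φ (f u) ≠ 0) (hker : ∀ i ∈ s \ {u}, φ (f i) = 0) :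
    span K (f '' (s \ {u})) = span K (f '' s) ⊓ LinearMap.ker φ := by
  conv_rhs => rw [← Set.insert_eq_of_mem hu, ← Set.insert_sdiff_singleton, Set.image_insert_eq]
  refine (span_insert_inf_ker hφ ?_).symm
  rintro _ ⟨i, hi, rfl⟩
  exact hker i hi

theorem Submodule.exists_finset_sum_eq_of_mem_span_image {ι W : Type*} [AddCommGroup W]
    [Module (ZMod 2) W] {d : ι → W} {s : Set ι} {x : W}
    (hx : x ∈ span (ZMod 2) (d '' s)) : ∃ T : Finset ι, ↑T ⊆ s ∧ ∑ i ∈ T, d i = x := by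
  obtain ⟨l, hl, rfl⟩ := (Finsupp.mem_span_image_iff_linearCombination _).1 hx
  refine ⟨l.support, (Finsupp.mem_supported _ _).1 hl, ?_⟩
  rw [Finsupp.linearCombination_apply, Finsupp.sum]
  refine Finset.sum_congr rfl fun i hi => ?_
  rw [ZMod.eq_one_of_ne_zero_two (Finsupp.mem_support_iff.1 hi), one_smul]

theorem eq_of_span_image_eq_of_forall_eq_zero {ι R W : Type*} [Semiring R] [AddCommMonoid W]
    [Module R W] {s : Set ι} {d h : ι → W} (hout : ∀ i ∉ s, d i = h i)
    (hspan : span R (d '' s) = span R (h '' s)) (hz : ∀ i ∈ s, h i = 0) : d = h := by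
  have hbot : span R (d '' s) = ⊥ :=
    hspan ▸ span_eq_bot.2 (by rintro _ ⟨i, hi, rfl⟩; exact hz i hi)
  funext i
  by_cases hi : i ∈ s
  · rw [hz i hi]
    exact span_eq_bot.1 hbot _ ⟨i, hi, rfl⟩
  · exact hout i hi

section

variable {ι W : Type*} [DecidableEq ι] [AddCommGroup W]

inductive RowAdd (s : Set ι) : (ι → W) → (ι → W) → Prop
  | mk (f : ι → W) {u v : ι} (hu : u ∈ s) (hv : v ∈ s) (huv : u ≠ v) :
      RowAdd s f (update f v (f v + f u))

namespace RowAdd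

variable {s : Set ι} {f g : ι → W}

theorem apply_of_notMem (h : RowAdd s f g) {i : ι} (hi : i ∉ s) : g i = f i := by
  obtain @⟨u, v, -, hv, -⟩ := h
  exact update_of_ne (ne_of_mem_of_not_mem hv hi).symm _ _

theorem mono {t : Set ι} (hst : s ⊆ t) (h : RowAdd s f g) : RowAdd t f g := by
  obtain @⟨u, v, hu, hv, huv⟩ := h
  exact mk f (hst hu) (hst hv) huv

theorem apply_eq_of_reflTransGen (h : ReflTransGen (RowAdd s) f g) {i : ι} (hi : i ∉ s) :
    g i = f i := by
  induction h with
  | refl => rfl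
  | tail _ hstep ih => exact (hstep.apply_of_notMem hi).trans ih

theorem reflTransGen_update_add_sum (f : ι → W) {u : ι} (hu : u ∈ s) {T : Finset ι}
    (hTs : ↑T ⊆ s) (huT : u ∉ T) :
    ReflTransGen (RowAdd s) f (update f u (f u + ∑ i ∈ T, f i)) := by
  induction T using Finset.induction_on with
  | empty => simpa using ReflTransGen.refl
  | insert a T haT ih =>
    rw [Finset.coe_insert, Set.insert_subset_iff] at hTs
    rw [Finset.mem_insert, not_or] at huT
    refine (ih hTs.2 huT.2).tail ?_
    convert mk _ hTs.1 hu (Ne.symm huT.1) using 1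
    simp [update_of_ne (Ne.symm huT.1), Finset.sum_insert haT, add_assoc, add_comm (f a)]

theorem reflTransGen_add_of_mem (f : ι → W) {u : ι} (hu : u ∈ s) {T : Finset ι}
    (hTs : ↑T ⊆ s) (huT : u ∉ T) :
    ReflTransGen (RowAdd s) f (fun i => if i ∈ T then f i + f u else f i) := by
  induction T using Finset.induction_on with
  | empty => simpa using ReflTransGen.refl
  | insert a T haT ih =>
    rw [Finset.coe_insert, Set.insert_subset_iff] at hTs
    rw [Finset.mem_insert, not_or] at huT
    refine (ih hTs.2 huT.2).tail ?_
    convert mk _ hu hTs.1 huT.1 using 1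
    funext i
    rcases eq_or_ne i a with rfl | hia
    · simp [haT, huT.2]
    · simp [hia]

variable [Module (ZMod 2) W]

theorem symm (h : RowAdd s f g) : RowAdd s g f := by
  obtain @⟨u, v, hu, hv, huv⟩ := h
  convert mk (update f _ (f _ + f _)) hu hv huv using 1
  simp [update_of_ne huv, add_assoc, ZModModule.add_self]

instance : Std.Symm (RowAdd (W := W) s) := ⟨fun _ _ => symm⟩

theorem span_image_le (h : RowAdd s f g) : span (ZMod 2) (g '' s) ≤ span (ZMod 2) (f '' s) := by
  obtain @⟨u, v, hu, hv, huv⟩ := h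
  have mem : ∀ j ∈ s, f j ∈ span (ZMod 2) (f '' s) := fun j hj => subset_span ⟨j, hj, rfl⟩
  rw [span_le]
  rintro _ ⟨i, hi, rfl⟩
  rcases eq_or_ne i v with rfl | hiv
  · simpa using add_mem (mem _ hi) (mem _ hu)
  · simpa [update_of_ne hiv] using mem i hi

theorem span_image_eq_of_reflTransGen (h : ReflTransGen (RowAdd s) f g) :
    span (ZMod 2) (g '' s) = span (ZMod 2) (f '' s) := by
  induction h with
  | refl => rfl
  | tail _ hstep ih => exact (le_antisymm hstep.span_image_le hstep.symm.span_image_le).trans ih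

theorem exists_reflTransGen_apply_eq (d : ι → W) {u : ι} (hu : u ∈ s) {x : W}
    (hx : x ∈ span (ZMod 2) (d '' s)) (hx0 : x ≠ 0) :
    ∃ d', ReflTransGen (RowAdd s) d d' ∧ d' u = x := by
  obtain ⟨T, hTs, rfl⟩ := exists_finset_sum_eq_of_mem_span_image hx
  by_cases huT : u ∈ T
  · refine ⟨_, reflTransGen_update_add_sum d hu ((T.coe_erase u ▸ Set.sdiff_subset).trans hTs)
      (T.notMem_erase u), ?_⟩
    simp [Finset.add_sum_erase _ _ huT]
  -- Otherwise first add row `u` to some row `v ∈ T`, so that the rows in `T` sum to `x + d u`.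
  obtain ⟨v, hv⟩ := Finset.exists_ne_zero_of_sum_ne_zero hx0
  have huv : u ≠ v := ne_of_mem_of_not_mem hv.1 huT |>.symm
  set e := update d v (d v + d u)
  have hsum : ∑ i ∈ T, e i = ∑ i ∈ T, d i + d u := by
    rw [Finset.sum_update_of_mem hv.1, Finset.sdiff_singleton_eq_erase, ← T.add_sum_erase d hv.1]
    abel
  refine ⟨_, (ReflTransGen.single (mk d hu (hTs hv.1) huv)).trans
    (reflTransGen_update_add_sum e hu hTs huT), ?_⟩
  simp [hsum, e, update_of_ne huv, add_left_comm (d u), ZModModule.add_self]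

theorem exists_reflTransGen_forall_ker (hs : s.Finite) (f : ι → W) {u : ι} (hu : u ∈ s)
    {φ : Module.Dual (ZMod 2) W} (hφ : φ (f u) = 1) :
    ∃ g, ReflTransGen (RowAdd s) f g ∧ (∀ i ∉ s \ {u}, g i = f i) ∧
      ∀ i ∈ s \ {u}, φ (g i) = 0 := by
  set T := hs.toFinset.filter (fun i => i ≠ u ∧ φ (f i) ≠ 0)
  have hT : ∀ i, i ∈ T ↔ i ∈ s \ {u} ∧ φ (f i) ≠ 0 := by simp [T, and_assoc]
  refine ⟨_, reflTransGen_add_of_mem f hu (T := T) (fun i hi => ((hT i).1 hi).1.1)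
    (fun h => ((hT u).1 h).1.2 rfl), fun i hi => ?_, fun i hi => ?_⟩
  · simp [hT, hi]
  · by_cases hφi : φ (f i) = 0
    · simp [hT, hφi]
    · simp [hT, hi, ZMod.eq_one_of_ne_zero_two hφi, hφ, CharTwo.add_self_eq_zero]

theorem reflTransGen_of_span_eq (hs : s.Finite) {d h : ι → W} (hout : ∀ i ∉ s, d i = h i)
    (hspan : span (ZMod 2) (d '' s) = span (ZMod 2) (h '' s)) :
    ReflTransGen (RowAdd s) d h := by
  induction hn : s.ncard using Nat.strong_induction_on generalizing s d h with
  | _ n ih =>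
  by_cases hz : ∀ u ∈ s, h u = 0
  · obtain rfl := eq_of_span_image_eq_of_forall_eq_zero hout hspan hz
    rfl
  push Not at hz
  obtain ⟨u, hu, hx⟩ := hz
  obtain ⟨φ, hφ⟩ := Module.Projective.exists_dual_eq_one (ZMod 2) hx
  obtain ⟨d₁, hdd₁, hd₁u⟩ :=
    exists_reflTransGen_apply_eq d hu (hspan ▸ subset_span ⟨u, hu, rfl⟩) hx
  obtain ⟨d₂, hd₁d₂, hd₂out, hd₂ker⟩ := exists_reflTransGen_forall_ker hs d₁ hu (hd₁u ▸ hφ)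
  obtain ⟨h₂, hhh₂, hh₂out, hh₂ker⟩ := exists_reflTransGen_forall_ker hs h hu hφ
  have hdd₂ := hdd₁.trans hd₁d₂
  have hu' : u ∉ s \ {u} := fun hmem => hmem.2 rfl
  have hout' : ∀ i ∉ s \ {u}, d₂ i = h₂ i := by
    intro i hi
    rw [hd₂out i hi, hh₂out i hi]
    by_cases his : i ∈ s
    · obtain rfl : i = u := by simpa [his] using hi
      exact hd₁u
    · rw [apply_eq_of_reflTransGen hdd₁ his, hout i his]
  have hspan' : span (ZMod 2) (d₂ '' (s \ {u})) = span (ZMod 2) (h₂ '' (s \ {u})) := by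
    have hφd₂ : φ (d₂ u) ≠ 0 := by simp [hd₂out u hu', hd₁u, hφ]
    have hφh₂ : φ (h₂ u) ≠ 0 := by simp [hh₂out u hu', hφ]
    rw [span_image_sdiff_singleton_eq_inf_ker hu hφd₂ hd₂ker,
      span_image_sdiff_singleton_eq_inf_ker hu hφh₂ hh₂ker, span_image_eq_of_reflTransGen hdd₂,
      span_image_eq_of_reflTransGen hhh₂, hspan]
  have hlt : (s \ {u}).ncard < n := hn ▸ Set.ncard_sdiff_singleton_lt_of_mem hu hs
  have hd₂h₂ := ih _ hlt hs.sdiff hout' hspan' rfl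
  exact hdd₂.trans ((ReflTransGen.mono (fun _ _ => mono Set.sdiff_subset) _ _ hd₂h₂).trans
    (_root_.symm hhh₂))

theorem reflTransGen_iff (hs : s.Finite) {d h : ι → W} :
    ReflTransGen (RowAdd s) d h ↔
      (∀ i ∉ s, d i = h i) ∧ span (ZMod 2) (d '' s) = span (ZMod 2) (h '' s) :=
  ⟨fun hdh => ⟨fun _ hi => (apply_eq_of_reflTransGen hdh hi).symm,
    (span_image_eq_of_reflTransGen hdh).symm⟩,
   fun ⟨hout, hspan⟩ => reflTransGen_of_span_eq hs hout hspan⟩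

end RowAdd

end

section Digraph

variable {V : Type*}

def rootSet (R : V → V → Prop) : Set V := {v | ∀ w, ¬ R w v}

theorem slideRel_iff {R : V → V → Prop} {u v a b : V} :
    slideRel R u v a b ↔ R a b ∧ ¬(a = v ∧ R u b) ∨ (a = v ∧ R u b) ∧ ¬R a b :=
  Iff.rfl

theorem rootRowSpace_eq_span_image (R : V → V → Prop) :
    rootRowSpace R = span (ZMod 2) (rowVec R '' rootSet R) := by
  simp only [rootRowSpace, Set.image, rootSet, Set.mem_ofPred_eq, eq_comm]

theorem rowVec_eq_rowVec_iff {R S : V → V → Prop} {x : V} :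
    rowVec R x = rowVec S x ↔ ∀ y, R x y ↔ S x y := by
  simp only [funext_iff, rowVec]
  refine forall_congr' fun y => ?_
  by_cases hR : R x y <;> by_cases hS : S x y <;> simp [hR, hS]

theorem rowVec_injective : Injective (rowVec : (V → V → Prop) → V → V → ZMod 2) :=
  fun _ _ h => funext fun x => funext fun y => propext (rowVec_eq_rowVec_iff.1 (congr_fun h x) y)

theorem rowVec_slideRel [DecidableEq V] (R : V → V → Prop) (u v : V) :
    rowVec (slideRel R u v) = update (rowVec R) v (rowVec R v + rowVec R u) := by
  funext a
  rcases eq_or_ne a v with rfl | hav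
  · funext b
    by_cases hR : R a b <;> by_cases hu : R u b <;>
      simp [rowVec, slideRel_iff, hR, hu, CharTwo.add_self_eq_zero]
  · rw [update_of_ne hav]
    exact rowVec_eq_rowVec_iff.2 fun b => by simp [slideRel_iff, hav]

theorem rootSet_slideRel (R : V → V → Prop) {u v : V} (huv : u ≠ v) :
    rootSet (slideRel R u v) = rootSet R := by
  ext b
  simp only [rootSet, Set.mem_ofPred_eq, slideRel_iff]
  refine ⟨fun hS a hab => ?_, fun hR a => by simp [hR]⟩
  rcases eq_or_ne a v with rfl | hav
  · by_cases hub : R u b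
    · exact hS u (by simp [hub, huv])
    · exact hS a (by simp [hab, hub])
  · exact hS a (by simp [hab, hav])

theorem RootSlide.rootSet_eq {R S : V → V → Prop} (h : RootSlide R S) :
    rootSet S = rootSet R := by
  obtain @⟨u, v, huv, -, -⟩ := h
  exact rootSet_slideRel R huv

theorem RootSlide.rowAdd [DecidableEq V] {R S : V → V → Prop} (h : RootSlide R S) :
    RowAdd (rootSet R) (rowVec R) (rowVec S) := by
  obtain @⟨u, v, huv, hu, hv⟩ := h
  rw [rowVec_slideRel]
  exact RowAdd.mk _ hu hv huv

theorem rootSet_eq_of_reflTransGen_rootSlide {R S : V → V → Prop}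
    (h : ReflTransGen RootSlide R S) : rootSet S = rootSet R := by
  induction h with
  | refl => rfl
  | tail _ hstep ih => exact hstep.rootSet_eq.trans ih

theorem exists_reflTransGen_rootSlide_rowVec_eq [DecidableEq V] {R : V → V → Prop}
    {g : V → V → ZMod 2} (h : ReflTransGen (RowAdd (rootSet R)) (rowVec R) g) :
    ∃ S, ReflTransGen RootSlide R S ∧ rowVec S = g := by
  induction h with
  | refl => exact ⟨R, .refl, rfl⟩
  | tail _ hstep ih =>
    obtain ⟨S, hRS, rfl⟩ := ih
    obtain @⟨u, v, hu, hv, huv⟩ := hstep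
    rw [← rootSet_eq_of_reflTransGen_rootSlide hRS] at hu hv
    exact ⟨_, hRS.tail (.mk S u v huv hu hv), rowVec_slideRel S u v⟩

theorem reflTransGen_rootSlide_iff [DecidableEq V] {D H : V → V → Prop} :
    ReflTransGen RootSlide D H ↔ ReflTransGen (RowAdd (rootSet D)) (rowVec D) (rowVec H) := by
  refine ⟨fun h => ?_, fun h => ?_⟩
  · induction h with
    | refl => rfl
    | tail hDS hstep ih => exact ih.tail (rootSet_eq_of_reflTransGen_rootSlide hDS ▸ hstep.rowAdd)
  · obtain ⟨S, hDS, hS⟩ := exists_reflTransGen_rootSlide_rowVec_eq h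
    rwa [← rowVec_injective hS]

theorem forall_notMem_rootSet_rowVec_eq_iff {D H : V → V → Prop}
    (hDH : rootSet D = rootSet H) :
    (∀ x ∉ rootSet D, rowVec D x = rowVec H x) ↔
      ∀ x y : V, (∃ w, D w x) → (∃ w, D w y) → (D x y ↔ H x y) := by
  have hnot : ∀ x, x ∉ rootSet D ↔ ∃ w, D w x := by simp [rootSet]
  refine ⟨fun h x y hx _ => rowVec_eq_rowVec_iff.1 (h x ((hnot x).2 hx)) y,
    fun h x hx => rowVec_eq_rowVec_iff.2 fun y => ?_⟩
  by_cases hy : y ∈ rootSet D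
  · exact iff_of_false (hy x) ((hDH ▸ hy : y ∈ rootSet H) x)
  · exact h x y ((hnot x).1 hx) ((hnot y).1 hy)

end Digraph

theorem rootSlide_characterization_general {V : Type*} [Fintype V]
    (D H : V → V → Prop) :
    Relation.ReflTransGen RootSlide D H ↔
      (({v : V | ∀ w, ¬ D w v} = {v : V | ∀ w, ¬ H w v}) ∧
       (∀ x y : V, (∃ w, D w x) → (∃ w, D w y) → (D x y ↔ H x y)) ∧
       rootRowSpace D = rootRowSpace H) := by
  classical
  have hfin : (rootSet D).Finite := Set.toFinite _
  refine ⟨fun h => ?_, fun ⟨hroots, hrows, hspan⟩ => ?_⟩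
  · have hroots := (rootSet_eq_of_reflTransGen_rootSlide h).symm
    obtain ⟨hout, hspan⟩ := (RowAdd.reflTransGen_iff hfin).1 (reflTransGen_rootSlide_iff.1 h)
    refine ⟨hroots, (forall_notMem_rootSet_rowVec_eq_iff hroots).1 hout, ?_⟩
    rwa [rootRowSpace_eq_span_image, rootRowSpace_eq_span_image, ← hroots]
  · replace hroots : rootSet D = rootSet H := hroots
    rw [rootRowSpace_eq_span_image, rootRowSpace_eq_span_image, ← hroots] at hspan
    exact reflTransGen_rootSlide_iff.2 ((RowAdd.reflTransGen_iff hfin).2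
      ⟨(forall_notMem_rootSet_rowVec_eq_iff hroots).2 hrows, hspan⟩)

/-- Characterization of digraphs obtainable by slides on roots: for acyclic
digraphs `D`, `H` on the same vertex set, `H` is obtained from `D` by a
finite sequence of slides on pairs of roots if and only if (1) `D` and `H`
have the same roots and the same induced subgraph on the non-roots, and
(2) the `𝔽₂`-row spaces of `A_D[L₀(D), V∖L₀(D)]` and `A_H[L₀(H), V∖L₀(H)]`
coincide. -/
theorem rootSlide_characterization {V : Type*} [Fintype V]
    (D H : V → V → Prop) (hD : AcyclicRel D) (hH : AcyclicRel H) :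
    Relation.ReflTransGen RootSlide D H ↔
      (({v : V | ∀ w, ¬ D w v} = {v : V | ∀ w, ¬ H w v}) ∧
       (∀ x y : V, (∃ w, D w x) → (∃ w, D w y) → (D x y ↔ H x y)) ∧
       rootRowSpace D = rootRowSpace H) :=
  rootSlide_characterization_general D H
end
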